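/- Let f : R → R be convex, x ∈ R, t > 0, and let M_f(x,t) = min_y [(x−y)²/(2t) + f(y)] be the Moreau envelope with proximal operator prox_f(x,t) = argmin_y [f(y) + (y−x)²/(2t)]. Then ∂M_f/∂x (x,t) = (x − prox_f(x,t))/t and ∂M_f/∂t (x,t) = −(x − prox_f(x,t))²/(2t²). -/

import Mathlib

/-!
With `q(x,t,y) = (y - x)²/(2t)`, `p = prox x t` and `p' = prox x' t'`, testing the two
minimisation problems against each other's minimiser sandwiches `M(x',t') - M(x,t)` between
`q(x',t',p') - q(x,t,p')` and `q(x',t',p) - q(x,t,p)`. Both brackets are increments of the smooth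
function `q(·,·,y)`, so the derivatives of `M` are those of `q` at `y = p`, as soon as `p' → p`.
That continuity of `prox` is where convexity enters: it makes the proximal objective grow
quadratically away from its minimiser, and comparing the objectives at `p` and `p'` bounds
`|p' - p|`.
-/

open Filter Topology

def IsProx (f : ℝ → ℝ) (prox : ℝ → ℝ → ℝ) : Prop :=
  ∀ x t, 0 < t → ∀ y : ℝ, f (prox x t) + (prox x t - x)^2/(2*t) ≤ f y + (y - x)^2/(2*t)

noncomputable def moreauEnvelope (f : ℝ → ℝ) (x t : ℝ) : ℝ :=
  ⨅ y : ℝ, ((x - y)^2/(2*t) + f y)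

theorem hasDerivAt_of_squeeze {g lo hi : ℝ → ℝ} {x d : ℝ}
    (hlo : Tendsto lo (𝓝 x) (𝓝 d)) (hhi : Tendsto hi (𝓝 x) (𝓝 d))
    (hle : ∀ᶠ x' in 𝓝 x, (x' - x) * lo x' ≤ g x' - g x ∧ g x' - g x ≤ (x' - x) * hi x') :
    HasDerivAt g d x := by
  rw [hasDerivAt_iff_tendsto_slope, slope_fun_def_field]
  have hmin := (hlo.min hhi).mono_left (nhdsWithin_le_nhds (s := {x}ᶜ))
  have hmax := (hlo.max hhi).mono_left (nhdsWithin_le_nhds (s := {x}ᶜ))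
  rw [min_self] at hmin
  rw [max_self] at hmax
  have hle' := nhdsWithin_le_nhds (s := {x}ᶜ) hle
  refine tendsto_of_tendsto_of_tendsto_of_le_of_le' hmin hmax ?_ ?_ <;>
    filter_upwards [hle', self_mem_nhdsWithin] with x' ⟨hl, hh⟩ hne <;>
    rcases lt_or_gt_of_ne (sub_ne_zero.2 (hne : x' ≠ x)) with hneg | hpos
  · exact min_le_of_right_le ((le_div_iff_of_neg hneg).2 (by linarith))
  · exact min_le_of_left_le ((le_div_iff₀ hpos).2 (by linarith))
  · exact le_max_of_le_left ((div_le_iff_of_neg hneg).2 (by linarith))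
  · exact le_max_of_le_right ((div_le_iff₀ hpos).2 (by linarith))

section

variable {f : ℝ → ℝ} {prox : ℝ → ℝ → ℝ}

theorem IsProx.moreauEnvelope_eq (h : IsProx f prox) {x t : ℝ} (ht : 0 < t) :
    moreauEnvelope f x t = f (prox x t) + (prox x t - x)^2/(2*t) := by
  refine IsGLB.ciInf_eq (IsLeast.isGLB ⟨⟨prox x t, ?_⟩, ?_⟩)
  · ring
  · rintro _ ⟨y, rfl⟩
    dsimp only
    linarith [h x t ht y, show (x - y)^2/(2*t) = (y - x)^2/(2*t) by ring]

theorem IsProx.moreauEnvelope_sub_le (h : IsProx f prox) {x x' t t' : ℝ} (ht : 0 < t)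
    (ht' : 0 < t') :
    moreauEnvelope f x' t' - moreauEnvelope f x t
      ≤ (prox x t - x')^2/(2*t') - (prox x t - x)^2/(2*t) := by
  rw [h.moreauEnvelope_eq ht, h.moreauEnvelope_eq ht']
  linarith [h x' t' ht' (prox x t)]

theorem IsProx.add_sq_le (hf : ConvexOn ℝ Set.univ f) (h : IsProx f prox) {x t : ℝ}
    (ht : 0 < t) (y : ℝ) :
    f (prox x t) + (prox x t - x)^2/(2*t) + (y - prox x t)^2/(4*t)
      ≤ f y + (y - x)^2/(2*t) := by
  set p := prox x t
  have hmid := h x t ht ((y + p)/2)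
  have hconv := hf.2 (Set.mem_univ y) (Set.mem_univ p) (by norm_num : (0:ℝ) ≤ 1/2)
    (by norm_num : (0:ℝ) ≤ 1/2) (by norm_num)
  simp only [smul_eq_mul] at hconv
  have hpar : ((y + p)/2 - x)^2/(2*t) =
      (y - x)^2/(4*t) + (p - x)^2/(4*t) - (y - p)^2/(8*t) := by
    field_simp
    ring
  rw [show (1:ℝ)/2 * y + 1/2 * p = (y + p)/2 by ring] at hconv
  rw [hpar] at hmid
  linarith [show (y - p)^2/(4*t) = 2 * ((y - p)^2/(8*t)) by ring,
    show (y - x)^2/(2*t) = 2 * ((y - x)^2/(4*t)) by ring,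
    show (p - x)^2/(2*t) = 2 * ((p - x)^2/(4*t)) by ring]

theorem IsProx.sq_sub_le (hf : ConvexOn ℝ Set.univ f) (h : IsProx f prox) {x x' t t' : ℝ}
    (ht : 0 < t) (ht' : 0 < t') :
    (prox x' t' - prox x t)^2/(4*t) + (prox x' t' - prox x t)^2/(4*t')
      ≤ (prox x' t' - x)^2/(2*t) - (prox x t - x)^2/(2*t)
        + (prox x t - x')^2/(2*t') - (prox x' t' - x')^2/(2*t') := by
  linarith [h.add_sq_le hf (x := x) ht (prox x' t'), h.add_sq_le hf (x := x') ht' (prox x t),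
    show (prox x t - prox x' t')^2/(4*t') = (prox x' t' - prox x t)^2/(4*t') by ring]

theorem IsProx.lipschitzWith_left (hf : ConvexOn ℝ Set.univ f) (h : IsProx f prox) {t : ℝ}
    (ht : 0 < t) : LipschitzWith 2 (prox · t) := by
  refine LipschitzWith.of_dist_le_mul fun x' x => ?_
  simp only [Real.dist_eq, NNReal.coe_ofNat]
  have hsum := h.sq_sub_le hf (x := x) (x' := x') ht ht
  have key : (prox x' t - prox x t)^2 ≤ 2 * ((x' - x) * (prox x' t - prox x t)) := by
    have : (prox x' t - prox x t)^2 / (2*t) ≤ 2 * ((x' - x) * (prox x' t - prox x t)) / (2*t) := by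
      convert hsum using 1 <;> field_simp <;> ring
    exact (div_le_div_iff_of_pos_right (by positivity)).1 this
  nlinarith [abs_mul_abs_self (prox x' t - prox x t), abs_mul_abs_self (x' - x),
    abs_nonneg (prox x' t - prox x t), abs_nonneg (x' - x),
    abs_mul (x' - x) (prox x' t - prox x t), le_abs_self ((x' - x) * (prox x' t - prox x t))]


theorem IsProx.abs_sub_mul_le_right (hf : ConvexOn ℝ Set.univ f) (h : IsProx f prox)
    {x t t' : ℝ} (ht' : 0 < t') (ht't : t' ≤ 2 * t) :
    |prox x t' - prox x t| * t ≤ 4 * |prox x t - x| * |t' - t| := by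
  have ht : 0 < t := by linarith
  set u := prox x t' - prox x t
  set a := prox x t - x
  have hsum := h.sq_sub_le hf (x := x) (x' := x) ht ht'
  have key : u^2 * (3*t - t') ≤ 4 * (u * a * (t' - t)) := by
    have e : (prox x t' - x)^2 = (u + a)^2 := by ring
    rw [e] at hsum
    have hsum' : (u^2 * (t + t')) / (4*t*t') ≤ (2*u*(u + 2*a)*(t' - t)) / (4*t*t') := by
      convert hsum using 1 <;> field_simp <;> ring
    nlinarith [(div_le_div_iff_of_pos_right (by positivity)).1 hsum']
  have hu : |u| * (|u| * t) ≤ |u| * (4 * |a| * |t' - t|) := by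
    have h3 : u * a * (t' - t) ≤ |u| * |a| * |t' - t| := by
      rw [← abs_mul, ← abs_mul]; exact le_abs_self _
    nlinarith [sq_abs u, sq_nonneg u]
  rcases (abs_nonneg u).eq_or_lt with h0 | hpos
  · rw [← h0, zero_mul]; positivity
  · exact le_of_mul_le_mul_left hu hpos

theorem IsProx.continuousAt_right (hf : ConvexOn ℝ Set.univ f) (h : IsProx f prox) {x t : ℝ}
    (ht : 0 < t) : ContinuousAt (prox x ·) t := by
  rw [ContinuousAt, tendsto_iff_dist_tendsto_zero]
  have hbound : Tendsto (fun t' => 4 * |prox x t - x| * |t' - t| / t) (𝓝 t) (𝓝 0) := by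
    have : Continuous (fun t' => 4 * |prox x t - x| * |t' - t| / t) := by fun_prop
    simpa using this.tendsto t
  refine squeeze_zero' (Eventually.of_forall fun _ => dist_nonneg) ?_ hbound
  filter_upwards [Ioo_mem_nhds (by linarith : 0 < t) (by linarith : t < 2 * t)] with t' ht'
  rw [Real.dist_eq, le_div_iff₀ ht]
  exact h.abs_sub_mul_le_right hf ht'.1 ht'.2.le

theorem IsProx.hasDerivAt_moreauEnvelope_left (hf : ConvexOn ℝ Set.univ f) (h : IsProx f prox)
    {x t : ℝ} (ht : 0 < t) :
    HasDerivAt (fun x' => moreauEnvelope f x' t) ((x - prox x t)/t) x := by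
  have hcont := (h.lipschitzWith_left hf ht).continuous
  refine hasDerivAt_of_squeeze (lo := fun x' => (x' + x - 2 * prox x' t)/(2*t))
    (hi := fun x' => (x' + x - 2 * prox x t)/(2*t)) ?_ ?_ (Eventually.of_forall fun x' => ⟨?_, ?_⟩)
  · have : Continuous (fun x' => (x' + x - 2 * prox x' t)/(2*t)) := by fun_prop
    convert this.tendsto x using 2
    field_simp
    ring
  · have : Continuous (fun x' => (x' + x - 2 * prox x t)/(2*t)) := by fun_prop
    convert this.tendsto x using 2
    field_simp
    ring
  · have hle := h.moreauEnvelope_sub_le (x := x') (x' := x) ht ht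
    have e : (x' - x) * ((x' + x - 2 * prox x' t)/(2*t))
        = (prox x' t - x')^2/(2*t) - (prox x' t - x)^2/(2*t) := by
      field_simp; ring
    linarith
  · have hle := h.moreauEnvelope_sub_le (x := x) (x' := x') ht ht
    have e : (x' - x) * ((x' + x - 2 * prox x t)/(2*t))
        = (prox x t - x')^2/(2*t) - (prox x t - x)^2/(2*t) := by
      field_simp; ring
    linarith

theorem IsProx.hasDerivAt_moreauEnvelope_right (hf : ConvexOn ℝ Set.univ f) (h : IsProx f prox)
    {x t : ℝ} (ht : 0 < t) :
    HasDerivAt (moreauEnvelope f x) (-(x - prox x t)^2/(2*t^2)) t := by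
  have hcont := h.continuousAt_right hf (x := x) ht
  refine hasDerivAt_of_squeeze (lo := fun t' => -(prox x t' - x)^2/(2*t*t'))
    (hi := fun t' => -(prox x t - x)^2/(2*t*t')) ?_ ?_ ?_
  · have : ContinuousAt (fun t' => -(prox x t' - x)^2/(2*t*t')) t := by
      fun_prop (disch := positivity)
    convert this.tendsto using 2
    field_simp
    ring
  · have : ContinuousAt (fun t' => -(prox x t - x)^2/(2*t*t')) t := by
      fun_prop (disch := positivity)
    convert this.tendsto using 2
    field_simp
    ring
  · filter_upwards [Ioi_mem_nhds ht] with t' (ht' : 0 < t')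
    have hlo := h.moreauEnvelope_sub_le (x := x) (x' := x) ht' ht
    have hhi := h.moreauEnvelope_sub_le (x := x) (x' := x) ht ht'
    have elo : (t' - t) * (-(prox x t' - x)^2/(2*t*t'))
        = (prox x t' - x)^2/(2*t') - (prox x t' - x)^2/(2*t) := by
      field_simp; ring
    have ehi : (t' - t) * (-(prox x t - x)^2/(2*t*t'))
        = (prox x t - x)^2/(2*t') - (prox x t - x)^2/(2*t) := by
      field_simp; ring
    constructor <;> linarith

end

theorem stmt12 (f : ℝ → ℝ) (hf : ConvexOn ℝ Set.univ f)
    (M : ℝ → ℝ → ℝ)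
    (hM : ∀ x t, M x t = ⨅ y : ℝ, ((x - y)^2/(2*t) + f y))
    (prox : ℝ → ℝ → ℝ)
    (hproxmin : ∀ x t, 0 < t →
      ∀ y : ℝ, f (prox x t) + (prox x t - x)^2/(2*t) ≤ f y + (y - x)^2/(2*t))
    (x t : ℝ) (ht : 0 < t) :
    HasDerivAt (fun x' => M x' t) ((x - prox x t)/t) x ∧
    HasDerivAt (fun t' => M x t') (-(x - prox x t)^2/(2*t^2)) t := by
  have hprox : IsProx f prox := hproxmin
  obtain rfl : M = moreauEnvelope f := funext fun x => funext (hM x)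
  exact ⟨hprox.hasDerivAt_moreauEnvelope_left hf ht, hprox.hasDerivAt_moreauEnvelope_right hf ht⟩
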